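/- arXiv:1007.1893 — 2 statements merged into one kernel-verified Lean document; each statement's English description precedes it below -/
import Mathlib

section
/- Let (Ω, F, (F_s)_{s≥0}, P) be a filtered probability space, let C > 0 and let (X_s)_{s≥0} be a nonnegative adapted real-valued process with right-continuous paths such that (e^{-Cs} X_s)_{s≥0} is a supermartingale and X_0 = x₀ almost surely for a constant x₀ ≥ 0. Let (τ_n)_{n≥1} be a nondecreasing sequence of stopping times such that for every n ≥ 1, X_{τ_n} ≥ n almost surely on {τ_n < ∞}. Then τ_n → ∞ almost surely as n → ∞. -/
open MeasureTheory Filter ENNReal NNReal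

theorem aux_maximal {Ω : Type*} {m0 : MeasurableSpace Ω} {μ : Measure Ω} [IsFiniteMeasure μ]
    {𝒢 : Filtration ℕ m0} {g : ℕ → Ω → ℝ} (hg : Supermartingale g 𝒢 μ)
    (hnn : ∀ k ω, 0 ≤ g k ω) (n : ℕ) {ε : ℝ} (hε : 0 < ε) :
    ε * (μ {ω | ∃ k ≤ n, ε ≤ g k ω}).toReal ≤ ∫ ω, g 0 ω ∂μ := by
  classical
  set A : Set Ω := {ω | ∃ k ≤ n, ε ≤ g k ω} with hA
  have hAeq : A = ⋃ k ∈ Finset.range (n+1), {ω | ε ≤ g k ω} := by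
    ext ω
    simp only [hA, Set.mem_setOf_eq, Set.mem_iUnion, Finset.mem_range, Nat.lt_succ_iff, exists_prop]
  have hmeasA : MeasurableSet A := by
    rw [hAeq]
    exact MeasurableSet.biUnion (Finset.range (n+1)).countable_toSet fun k _ =>
      measurableSet_le measurable_const ((hg.stronglyMeasurable k).measurable.mono (𝒢.le k) le_rfl)
  set σ : Ω → WithTop ℕ := fun ω => (hittingBtwn g (Set.Ici ε) 0 n ω : ℕ) with hσdef
  have hσ : IsStoppingTime 𝒢 σ := Adapted.isStoppingTime_hittingBtwn hg.stronglyAdapted.adapted measurableSet_Ici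
  have hσ_le : ∀ ω, σ ω ≤ n := fun ω => WithTop.coe_le_coe.2 (hittingBtwn_le ω)
  have hint : Integrable (stoppedValue g σ) μ :=
    integrable_stoppedValue ℕ hσ hg.integrable hσ_le
  have hkey : ∀ ω ∈ A, ε ≤ stoppedValue g σ ω := by
    intro ω hω
    obtain ⟨k, hk, hεk⟩ := hω
    exact stoppedValue_hittingBtwn_mem ⟨k, ⟨Nat.zero_le _, hk⟩, hεk⟩
  have h1 : ε * (μ A).toReal ≤ ∫ ω in A, stoppedValue g σ ω ∂μ :=
    by have h := setIntegral_ge_of_const_le hmeasA (measure_ne_top _ _) hkey hint.integrableOn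
       rw [smul_eq_mul, mul_comm] at h; exact h
  have h2 : ∫ ω in A, stoppedValue g σ ω ∂μ ≤ ∫ ω, stoppedValue g σ ω ∂μ :=
    setIntegral_le_integral hint (Filter.Eventually.of_forall fun ω => by
      simp only [stoppedValue]; exact hnn _ ω)
  have h3 : ∫ ω, stoppedValue g σ ω ∂μ ≤ ∫ ω, g 0 ω ∂μ := by
    have h := hg.neg.expected_stoppedValue_mono (isStoppingTime_const 𝒢 0) hσ
      (fun ω => zero_le) hσ_le
    simp only [stoppedValue, Pi.neg_apply] at h
    rw [integral_neg, integral_neg] at h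
    change -∫ a, g 0 a ∂μ ≤ _ at h
    simp only [stoppedValue]
    linarith
  linarith

theorem aux_maximal_cont {Ω : Type*} {m0 : MeasurableSpace Ω} {μ : Measure Ω} [IsFiniteMeasure μ]
    {ℱ : Filtration ℝ≥0 m0} {Y : ℝ≥0 → Ω → ℝ}
    (hY : Supermartingale Y ℱ μ) (hnn : ∀ s ω, 0 ≤ Y s ω) (d : ℕ → ℝ≥0) (k : ℕ)
    {ε : ℝ} (hε : 0 < ε) :
    ε * (μ {ω | ∃ i ≤ k, ε ≤ Y (d i) ω}).toReal ≤ ∫ ω, Y 0 ω ∂μ := by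
  classical
  set F := (Finset.range (k+1)).image d with hF
  have hFne : F.Nonempty := ⟨d 0, Finset.mem_image_of_mem d (by simp)⟩
  set M := F.max' hFne with hM
  have hck : F.card ≤ k + 1 := le_trans Finset.card_image_le (by simp)
  let φ := F.orderIsoOfFin rfl
  let e : ℕ → ℝ≥0 := fun j => if h : j < F.card then (φ ⟨j, h⟩ : ℝ≥0) else M
  have heF : ∀ j, e j ∈ F := by
    intro j
    by_cases h : j < F.card
    · simp only [e, dif_pos h]; exact (φ ⟨j, h⟩).2
    · simp only [e, dif_neg h]; exact F.max'_mem hFne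
  have heM : ∀ j, e j ≤ M := fun j => F.le_max' _ (heF j)
  have hemono : Monotone e := by
    intro i j hij
    by_cases hj : j < F.card
    · have hi : i < F.card := lt_of_le_of_lt hij hj
      simp only [e, dif_pos hi, dif_pos hj]
      exact Subtype.coe_le_coe.2 (φ.monotone (Fin.mk_le_mk.2 hij))
    · simp only [e, dif_neg hj]
      exact heM i
  let 𝒢 : Filtration ℕ m0 :=
    ⟨fun j => ℱ (e j), fun i j hij => ℱ.mono (hemono hij), fun j => ℱ.le (e j)⟩
  have hg : Supermartingale (fun j => Y (e j)) 𝒢 μ :=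
    ⟨fun j => hY.stronglyAdapted (e j), fun i j hij => hY.2.1 (e i) (e j) (hemono hij),
      fun j => hY.integrable (e j)⟩
  have hsub : {ω | ∃ i ≤ k, ε ≤ Y (d i) ω} ⊆ {ω | ∃ j ≤ k, ε ≤ Y (e j) ω} := by
    intro ω hω
    obtain ⟨i, hik, hεi⟩ := hω
    have hdF : d i ∈ F := Finset.mem_image_of_mem d (Finset.mem_range.2 (Nat.lt_succ_of_le hik))
    obtain ⟨j, hj⟩ := φ.surjective ⟨d i, hdF⟩
    refine ⟨j.1, Nat.le_of_lt_succ (lt_of_lt_of_le j.2 hck), ?_⟩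
    have : e j.1 = d i := by
      simp only [e, dif_pos j.2]
      rw [show (⟨j.1, j.2⟩ : Fin F.card) = j from rfl, hj]
    rwa [this]
  have h1 := aux_maximal hg (fun j ω => hnn (e j) ω) k hε
  have h2 : (∫ ω, Y (e 0) ω ∂μ) ≤ ∫ ω, Y 0 ω ∂μ := by
    have := hY.setIntegral_le (zero_le : 0 ≤ e 0) (MeasurableSet.univ (α := Ω))
    rwa [setIntegral_univ, setIntegral_univ] at this
  refine le_trans (le_trans ?_ h1) h2
  exact mul_le_mul_of_nonneg_left
    (ENNReal.toReal_mono (measure_ne_top _ _) (measure_mono hsub)) hε.le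

/-- Khasminsky's non-explosion lemma in abstract probabilistic form:
if `(e^{-Cs} X_s)` is a nonnegative right-continuous supermartingale with `X_0 = x₀` a.s.,
and `(τ_n)` is a nondecreasing sequence of stopping times with `X_{τ_n} ≥ n` a.s. on
`{τ_n < ∞}`, then `τ_n → ∞` almost surely. -/
theorem khasminsky_nonexplosion
    {Ω : Type*} {m0 : MeasurableSpace Ω} {μ : Measure Ω} [IsProbabilityMeasure μ]
    (ℱ : Filtration ℝ≥0 m0)
    (C : ℝ) (hC : 0 < C)
    (X : ℝ≥0 → Ω → ℝ)
    (hX_nonneg : ∀ s ω, 0 ≤ X s ω)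
    (hX_adapted : Adapted ℱ X)
    (hX_rc : ∀ ω, ∀ s : ℝ≥0, ContinuousWithinAt (fun u : ℝ≥0 => X u ω) (Set.Ici s) s)
    (hsuper : Supermartingale
      (fun (s : ℝ≥0) (ω : Ω) => Real.exp (-C * (s : ℝ)) * X s ω) ℱ μ)
    (x₀ : ℝ) (hx₀ : 0 ≤ x₀)
    (hX0 : ∀ᵐ ω ∂μ, X 0 ω = x₀)
    (τ : ℕ → Ω → ℝ≥0∞)
    (hτ_stopping : ∀ n, ∀ s : ℝ≥0, MeasurableSet[ℱ s] {ω | τ n ω ≤ (s : ℝ≥0∞)})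
    (hτ_mono : ∀ ω, Monotone fun n => τ n ω)
    (hXτ : ∀ n : ℕ, 1 ≤ n →
      ∀ᵐ ω ∂μ, τ n ω < ⊤ → (n : ℝ) ≤ X (τ n ω).toNNReal ω) :
    ∀ᵐ ω ∂μ, Tendsto (fun n => τ n ω) atTop (nhds ⊤) := by
  classical
  set Y : ℝ≥0 → Ω → ℝ := fun s ω => Real.exp (-C * (s : ℝ)) * X s ω with hYdef
  have hY_nonneg : ∀ s ω, 0 ≤ Y s ω := fun s ω =>
    mul_nonneg (Real.exp_nonneg _) (hX_nonneg s ω)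
  have hYint : (∫ ω, Y 0 ω ∂μ) = x₀ := by
    have h : (fun ω => Y 0 ω) =ᵐ[μ] fun _ => x₀ := by
      filter_upwards [hX0] with ω h
      simp [hYdef, h]
    rw [integral_congr_ae h]
    simp
  -- the key quantitative estimate
  have key : ∀ n : ℕ, 2 ≤ n → ∀ t : ℝ≥0,
      μ {ω | τ n ω ≤ (t : ℝ≥0∞)} ≤ ENNReal.ofReal (x₀ * Real.exp (C * t) / ((n : ℝ) - 1)) := by
    intro n hn t
    have hn1 : (1 : ℝ) ≤ (n : ℝ) - 1 := by
      have : (2 : ℝ) ≤ (n : ℝ) := by exact_mod_cast hn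
      linarith
    set ε : ℝ := Real.exp (-C * (t : ℝ)) * ((n : ℝ) - 1) with hεdef
    have hε_pos : 0 < ε := mul_pos (Real.exp_pos _) (by linarith)
    let ψ : ℕ ≃ ℚ := (Denumerable.eqv ℚ).symm
    set d : ℕ → ℝ≥0 := fun k => min t (Real.toNNReal ((ψ k : ℚ) : ℝ)) with hddef
    have hd_le : ∀ k, d k ≤ t := fun k => min_le_left _ _
    have hd_t : ∃ k, d k = t := by
      obtain ⟨q, hq⟩ := exists_rat_gt (t : ℝ)
      refine ⟨ψ.symm q, ?_⟩
      have h : (t : ℝ≥0) ≤ Real.toNNReal (q : ℝ) := by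
        rw [← Real.toNNReal_coe (r := t)]
        exact Real.toNNReal_mono hq.le
      simp only [hddef]
      rw [Equiv.apply_symm_apply]
      exact min_eq_left h
    have hd_dense : ∀ s : ℝ≥0, s < t → ∀ r : ℝ, 0 < r →
        ∃ k, s ≤ d k ∧ (d k : ℝ) < (s : ℝ) + r := by
      intro s hst r hr
      obtain ⟨q, hq1, hq2⟩ := exists_rat_btwn (lt_min (by exact_mod_cast hst)
        (lt_add_of_pos_right (s : ℝ) hr) : (s : ℝ) < min (t : ℝ) ((s : ℝ) + r))
      have h1 : s ≤ Real.toNNReal (q : ℝ) := by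
        rw [← Real.toNNReal_coe (r := s)]
        exact Real.toNNReal_mono hq1.le
      have h2 : Real.toNNReal (q : ℝ) ≤ t := by
        rw [← Real.toNNReal_coe (r := t)]
        exact Real.toNNReal_mono (le_of_lt (lt_of_lt_of_le hq2 (min_le_left _ _)))
      have hdk : d (ψ.symm q) = Real.toNNReal (q : ℝ) := by
        simp only [hddef]
        rw [Equiv.apply_symm_apply]
        exact min_eq_right h2
      refine ⟨ψ.symm q, ?_, ?_⟩
      · rw [hdk]; exact h1
      · rw [hdk]
        have hq0 : (0 : ℝ) ≤ (q : ℝ) := le_trans (s.coe_nonneg) hq1.le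
        rw [Real.coe_toNNReal _ hq0]
        exact lt_of_lt_of_le hq2 (min_le_right _ _)
    set E : Set Ω := {ω | ∃ i, ε ≤ Y (d i) ω} with hEdef
    have hE_bound : μ E ≤ ENNReal.ofReal (x₀ / ε) := by
      have hEeq : E = ⋃ i, {ω | ε ≤ Y (d i) ω} := by
        ext ω; simp [hEdef]
      rw [hEeq, measure_iUnion_eq_iSup_accumulate]
      refine iSup_le fun k => ?_
      have hacc : Set.accumulate (fun i => {ω | ε ≤ Y (d i) ω}) k
          = {ω | ∃ i ≤ k, ε ≤ Y (d i) ω} := by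
        ext ω
        simp [Set.mem_accumulate]
      rw [hacc]
      have h := aux_maximal_cont hsuper hY_nonneg d k hε_pos
      rw [hYint] at h
      rw [ENNReal.le_ofReal_iff_toReal_le (measure_ne_top _ _)
        (div_nonneg hx₀ hε_pos.le), le_div_iff₀ hε_pos]
      linarith
    have hsub : ∀ᵐ ω ∂μ, ω ∈ {ω | τ n ω ≤ (t : ℝ≥0∞)} → ω ∈ E := by
      filter_upwards [hXτ n (le_trans one_le_two hn)] with ω hω hmem
      have hlt : τ n ω < ⊤ := lt_of_le_of_lt hmem (ENNReal.coe_lt_top)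
      have hXs := hω hlt
      set s : ℝ≥0 := (τ n ω).toNNReal with hsdef
      have hst : s ≤ t := by
        rw [hsdef, ← ENNReal.coe_le_coe, ENNReal.coe_toNNReal hlt.ne]
        exact hmem
      -- find a grid point u with s ≤ u ≤ t and X u ω > n - 1
      have hu : ∃ i, s ≤ d i ∧ ((n : ℝ) - 1) ≤ X (d i) ω := by
        rcases eq_or_lt_of_le hst with heq | hlt'
        · obtain ⟨k, hk⟩ := hd_t
          refine ⟨k, by rw [hk, ← heq], ?_⟩
          rw [hk, ← heq]
          linarith
        · -- right continuity
          have hcont := hX_rc ω s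
          have hU : {u : ℝ≥0 | X s ω - 1 < X u ω} ∈ nhdsWithin s (Set.Ici s) := by
            exact hcont (Ioi_mem_nhds (by linarith))
          rw [Metric.mem_nhdsWithin_iff] at hU
          obtain ⟨r, hr, hball⟩ := hU
          obtain ⟨k, hk1, hk2⟩ := hd_dense s hlt' r hr
          refine ⟨k, hk1, ?_⟩
          have hmemball : d k ∈ Metric.ball s r ∩ Set.Ici s := by
            constructor
            · rw [Metric.mem_ball, NNReal.dist_eq, abs_lt]
              have hks : (s : ℝ) ≤ (d k : ℝ) := hk1
              exact ⟨by linarith, by linarith⟩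
            · exact hk1
          have := hball hmemball
          simp only [Set.mem_setOf_eq] at this
          linarith
      obtain ⟨i, hi1, hi2⟩ := hu
      refine ⟨i, ?_⟩
      have h1 : Real.exp (-C * (t : ℝ)) ≤ Real.exp (-C * (d i : ℝ)) := by
        apply Real.exp_le_exp.2
        have : (d i : ℝ) ≤ (t : ℝ) := hd_le i
        nlinarith
      calc ε = Real.exp (-C * (t : ℝ)) * ((n : ℝ) - 1) := rfl
        _ ≤ Real.exp (-C * (d i : ℝ)) * X (d i) ω := by
            apply mul_le_mul h1 hi2 (by linarith) (Real.exp_nonneg _)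
        _ = Y (d i) ω := rfl
    calc μ {ω | τ n ω ≤ (t : ℝ≥0∞)} ≤ μ E := measure_mono_ae hsub
      _ ≤ ENNReal.ofReal (x₀ / ε) := hE_bound
      _ = ENNReal.ofReal (x₀ * Real.exp (C * t) / ((n : ℝ) - 1)) := by
          congr 1
          rw [hεdef, neg_mul, Real.exp_neg]
          field_simp
  -- conclude each bad event is null
  have hB : ∀ t : ℕ, μ {ω | ∀ n : ℕ, τ n ω ≤ ((t : ℝ≥0) : ℝ≥0∞)} = 0 := by
    intro t
    have hle : ∀ n : ℕ, 2 ≤ n → μ {ω | ∀ m : ℕ, τ m ω ≤ ((t : ℝ≥0) : ℝ≥0∞)}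
        ≤ ENNReal.ofReal (x₀ * Real.exp (C * (t : ℝ≥0)) / ((n : ℝ) - 1)) := by
      intro n hn
      exact le_trans (measure_mono fun ω hω => hω n) (key n hn _)
    have htend : Tendsto (fun n : ℕ =>
        ENNReal.ofReal (x₀ * Real.exp (C * (t : ℝ≥0)) / ((n : ℝ) - 1))) atTop (nhds 0) := by
      rw [← ENNReal.ofReal_zero]
      apply ENNReal.tendsto_ofReal
      apply Tendsto.div_atTop tendsto_const_nhds
      exact tendsto_atTop_add_const_right _ _ tendsto_natCast_atTop_atTop
    have := ge_of_tendsto htend (eventually_atTop.2 ⟨2, fun n hn => hle n hn⟩)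
    exact le_antisymm this zero_le
  -- combine over all t
  have hae : ∀ᵐ ω ∂μ, ∀ t : ℕ, ¬(∀ n : ℕ, τ n ω ≤ ((t : ℝ≥0) : ℝ≥0∞)) := by
    rw [ae_all_iff]
    intro t
    rw [ae_iff]
    convert hB t using 2
    ext ω
    simp
  filter_upwards [hae] with ω hω
  have hmono := hτ_mono ω
  have htend := tendsto_atTop_iSup hmono
  have htop : (⨆ n, τ n ω) = ⊤ := by
    by_contra hne
    obtain ⟨t, ht⟩ := ENNReal.exists_nat_gt hne
    refine hω t fun n => ?_
    have : τ n ω ≤ ⨆ m, τ m ω := le_iSup (fun m => τ m ω) n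
    calc τ n ω ≤ ⨆ m, τ m ω := this
      _ ≤ ((t : ℝ≥0) : ℝ≥0∞) := by
          rw [show (((t : ℕ) : ℝ≥0) : ℝ≥0∞) = ((t : ℕ) : ℝ≥0∞) by simp]
          exact ht.le
  rwa [htop] at htend
end

section
/- Let (Ω, F, P) be a probability space, let (τ_n)_{n≥0} be a sequence of random variables with values in [0, ∞] such that τ_0 = 0, let (t_n)_{n≥1} be nonnegative real numbers, and set T_n = t_1 + ⋯ + t_n for n ≥ 1 (and T_0 = 0). If the series ∑_{n≥1} P( τ_n ≤ τ_{n-1} + t_n and τ_n ≤ T_n ) converges, then almost surely there exists δ ≥ 0 such that τ_n ≥ T_n − δ for all n ≥ 1. -/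
open MeasureTheory Filter ENNReal

/-- Hsu and Qin's Borel–Cantelli lemma for crossing times (Lemma 5.6 of the paper):
if the series `∑ P(τ_n ≤ τ_{n-1} + t_n and τ_n ≤ T_n)` converges, then almost surely
there is a `δ ≥ 0` with `τ_n ≥ T_n − δ` for all `n ≥ 1`. -/
theorem borel_cantelli_crossing_times
    {Ω : Type*} [MeasurableSpace Ω] {μ : Measure Ω} [IsProbabilityMeasure μ]
    (τ : ℕ → Ω → ℝ≥0∞) (hτ_meas : ∀ n, Measurable (τ n)) (hτ0 : ∀ ω, τ 0 ω = 0)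
    (t : ℕ → ℝ) (ht : ∀ n, 1 ≤ n → 0 ≤ t n)
    (T : ℕ → ℝ) (hT : ∀ n, T n = ∑ i ∈ Finset.Icc 1 n, t i)
    (hsum : (∑' n : ℕ, μ {ω | τ (n + 1) ω ≤ τ n ω + ENNReal.ofReal (t (n + 1)) ∧
        τ (n + 1) ω ≤ ENNReal.ofReal (T (n + 1))}) ≠ ⊤) :
    ∀ᵐ ω ∂μ, ∃ δ : ℝ, 0 ≤ δ ∧ ∀ n : ℕ, 1 ≤ n → ENNReal.ofReal (T n - δ) ≤ τ n ω := by
  have hae := MeasureTheory.ae_eventually_notMem (μ := μ)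
    (s := fun n => {ω | τ (n + 1) ω ≤ τ n ω + ENNReal.ofReal (t (n + 1)) ∧
        τ (n + 1) ω ≤ ENNReal.ofReal (T (n + 1))}) hsum
  have hTnonneg : ∀ n, 0 ≤ T n := fun n => (hT n) ▸
    Finset.sum_nonneg (fun i hi => ht i (Finset.mem_Icc.mp hi).1)
  have hTmono : ∀ m n : ℕ, m ≤ n → T m ≤ T n := by
    intro m n hmn
    rw [hT m, hT n]
    exact Finset.sum_le_sum_of_subset_of_nonneg (Finset.Icc_subset_Icc_right hmn)
      (fun i hi _ => ht i (Finset.mem_Icc.mp hi).1)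
  filter_upwards [hae] with ω hω
  obtain ⟨N, hN⟩ := eventually_atTop.mp hω
  refine ⟨T N, hTnonneg N, ?_⟩
  have key : ∀ n, N ≤ n → ENNReal.ofReal (T n - T N) ≤ τ n ω := by
    intro n hn
    induction n, hn using Nat.le_induction with
    | base => simp
    | succ n hn ih =>
      have hnot := hN n hn
      simp only [Set.mem_setOf_eq, not_and_or, not_le] at hnot
      have hstep : T (n + 1) = T n + t (n + 1) := by
        rw [hT (n + 1), hT n, Finset.sum_Icc_succ_top (Nat.succ_le_succ (Nat.zero_le n))]
      rcases hnot with h1 | h2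
      · calc ENNReal.ofReal (T (n + 1) - T N)
            = ENNReal.ofReal ((T n - T N) + t (n + 1)) := by rw [hstep]; ring_nf
          _ ≤ ENNReal.ofReal (T n - T N) + ENNReal.ofReal (t (n + 1)) := ENNReal.ofReal_add_le
          _ ≤ τ n ω + ENNReal.ofReal (t (n + 1)) := by gcongr
          _ ≤ τ (n + 1) ω := h1.le
      · calc ENNReal.ofReal (T (n + 1) - T N)
            ≤ ENNReal.ofReal (T (n + 1)) :=
              ENNReal.ofReal_le_ofReal (sub_le_self _ (hTnonneg N))
          _ ≤ τ (n + 1) ω := h2.le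
  intro n hn1
  rcases le_or_gt N n with h | h
  · exact key n h
  · have : T n - T N ≤ 0 := sub_nonpos.mpr (hTmono n N h.le)
    simp [ENNReal.ofReal_eq_zero.mpr this]
end
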